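/- Let (Rₙ)_{n∈ℕ} be an enumeration of c₀₀, and for each n set Tₙ = { R_i↾m : m ∈ ℕ, i ≤ n } and Gₙ = (Tₙ, Run(Tₙ)). Then each Gₙ is a finite game trivial for Ali, the chain (Gₙ) with the inclusion maps Gₙ → G_{n+1} is a Fraïssé sequence for the class of finite games trivial for Ali (with game embeddings as morphisms), and the inclusion maps iₙ : Gₙ → G_FL form a colimit cocone of this sequence in Games_A (in particular ⋃ₙ Tₙ = ω^{<ω} and ⋃ₙ Run(Tₙ) = c₀₀). -/
import Mathlib


universe u v w x y

namespace FraisseGames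

/-- The initial segment (of length `n`) of an infinite sequence `R`. -/
def runPrefix {M : Type u} (R : ℕ → M) (n : ℕ) : List M :=
  (List.range n).map R

/-- `T` is a game tree over `M`: it is closed under initial segments, and every
moment of `T` has a one-step extension in `T`. -/
def IsGameTree {M : Type u} (T : Set (List M)) : Prop :=
  (∀ t ∈ T, ∀ k : ℕ, t.take k ∈ T) ∧ ∀ t ∈ T, ∃ x : M, t ++ [x] ∈ T

/-- The set of runs of the tree `T`. -/
def Runs {M : Type u} (T : Set (List M)) : Set (ℕ → M) :=
  {R | ∀ n : ℕ, runPrefix R n ∈ T}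

/-- A game over `M`: a game tree together with a payoff set of runs. -/
structure Game (M : Type u) : Type u where
  tree : Set (List M)
  isGameTree : IsGameTree tree
  payoff : Set (ℕ → M)
  payoff_subset : payoff ⊆ Runs tree

/-- A game is finite if its set of runs is finite. -/
def Game.IsFin {M : Type u} (G : Game M) : Prop := (Runs G.tree).Finite

/-- The subgame relation `G ≤ G'`. -/
def Game.Sub {M : Type u} (G G' : Game M) : Prop :=
  G.tree ⊆ G'.tree ∧ G.payoff = G'.payoff ∩ Runs G.tree

/-- `f` is a chronological map from `T₁` to `T₂`: it maps `T₁` into `T₂` and it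
preserves lengths and truncations of moments. -/
def Chronological {M₁ : Type u} {M₂ : Type v} (T₁ : Set (List M₁)) (T₂ : Set (List M₂))
    (f : List M₁ → List M₂) : Prop :=
  (∀ t ∈ T₁, f t ∈ T₂) ∧ (∀ t ∈ T₁, (f t).length = t.length) ∧
    ∀ t ∈ T₁, ∀ k : ℕ, f (t.take k) = (f t).take k

/-- `BarMapsTo f R S` says that the map `f̄` on runs induced by the chronological
map `f` sends the run `R` to the run `S`, i.e. `S↾n = f (R↾n)` for all `n`. -/
def BarMapsTo {M₁ : Type u} {M₂ : Type v} (f : List M₁ → List M₂)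
    (R : ℕ → M₁) (S : ℕ → M₂) : Prop :=
  ∀ n : ℕ, runPrefix S n = f (runPrefix R n)

/-- `f` is an A-morphism from `G₁` to `G₂`: a chronological map whose induced map on
runs sends runs won by Ali to runs won by Ali. -/
def IsAMorphism {M₁ : Type u} {M₂ : Type v} (G₁ : Game M₁) (G₂ : Game M₂)
    (f : List M₁ → List M₂) : Prop :=
  Chronological G₁.tree G₂.tree f ∧
    ∀ R ∈ G₁.payoff, ∀ S : ℕ → M₂, BarMapsTo f R S → S ∈ G₂.payoff

/-- `f` is a game embedding from `G₁` to `G₂`: a chronological map, injective on the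
tree, such that for every run `R` of `G₁`, `R ∈ A₁ ↔ f̄ R ∈ A₂`. -/
def IsGameEmbedding {M₁ : Type u} {M₂ : Type v} (G₁ : Game M₁) (G₂ : Game M₂)
    (f : List M₁ → List M₂) : Prop :=
  Chronological G₁.tree G₂.tree f ∧
    (∀ t ∈ G₁.tree, ∀ s ∈ G₁.tree, f t = f s → t = s) ∧
    ∀ R ∈ Runs G₁.tree, ∀ S : ℕ → M₂, BarMapsTo f R S → (R ∈ G₁.payoff ↔ S ∈ G₂.payoff)

/-- `f` is an isomorphism of games from `G₁` onto `G₂`: a game embedding that is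
surjective onto the tree of `G₂`. -/
def IsGameIso {M₁ : Type u} {M₂ : Type v} (G₁ : Game M₁) (G₂ : Game M₂)
    (f : List M₁ → List M₂) : Prop :=
  IsGameEmbedding G₁ G₂ f ∧ ∀ s ∈ G₂.tree, ∃ t ∈ G₁.tree, f t = s

/-- The set of eventually-zero infinite sequences of natural numbers. -/
def c00 : Set (ℕ → ℕ) := {R | ∃ N : ℕ, ∀ n ≥ N, R n = 0}

/-- The game `G_FL = (ω^{<ω}, c₀₀)`. -/
def GFL : Game ℕ where
  tree := Set.univ
  isGameTree := ⟨fun _ _ _ => trivial, fun _ _ => ⟨0, trivial⟩⟩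
  payoff := c00
  payoff_subset := fun _ _ _ => trivial

/-- The universal property of a colimit cocone in the category `Games_A` of games and
A-morphisms: every cocone of A-morphisms over the sequence factors through `q`
via a unique (up to agreement on the tree) A-morphism.  (Morphisms of `Games_A` are
identified when they agree on the game tree.) -/
def IsGamesACoconeColimit.{u', v', w'} {MS : ℕ → Type u'} (S : ∀ n, Game (MS n))
    (s : ∀ n, List (MS n) → List (MS (n + 1)))
    {N : Type v'} (L : Game N) (q : ∀ n, List (MS n) → List N) : Prop :=
  ∀ (P : Type w') (H : Game P) (h : ∀ n, List (MS n) → List P),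
    (∀ n, IsAMorphism (S n) H (h n)) →
    (∀ n, ∀ t ∈ (S n).tree, h (n + 1) (s n t) = h n t) →
    ∃ k : List N → List P, IsAMorphism L H k ∧
      (∀ n, ∀ t ∈ (S n).tree, k (q n t) = h n t) ∧
      ∀ k' : List N → List P, IsAMorphism L H k' →
        (∀ n, ∀ t ∈ (S n).tree, k' (q n t) = h n t) →
        ∀ t ∈ L.tree, k' t = k t

/-- The tree `Tₙ = { R_i↾m : m ∈ ℕ, i ≤ n }`. -/
def Tseq (R : ℕ → ℕ → ℕ) (n : ℕ) : Set (List ℕ) :=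
  {t | ∃ i ≤ n, ∃ m : ℕ, t = runPrefix (R i) m}

lemma runPrefix_take {M : Type u} (R : ℕ → M) (m k : ℕ) :
    (runPrefix R m).take k = runPrefix R (min k m) := by
  simp [runPrefix, ← List.map_take, List.take_range]

lemma runPrefix_succ {M : Type u} (R : ℕ → M) (m : ℕ) :
    runPrefix R (m + 1) = runPrefix R m ++ [R m] := by
  simp [runPrefix, List.range_succ]

lemma Tseq_isGameTree (R : ℕ → ℕ → ℕ) (n : ℕ) : IsGameTree (Tseq R n) := by
  constructor
  · rintro t ⟨i, hi, m, rfl⟩ k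
    exact ⟨i, hi, min k m, runPrefix_take (R i) m k⟩
  · rintro t ⟨i, hi, m, rfl⟩
    exact ⟨R i m, i, hi, m + 1, (runPrefix_succ (R i) m).symm⟩

/-- The game `Gₙ = (Tₙ, Run(Tₙ))`. -/
def Gseq (R : ℕ → ℕ → ℕ) (n : ℕ) : Game ℕ where
  tree := Tseq R n
  isGameTree := Tseq_isGameTree R n
  payoff := Runs (Tseq R n)
  payoff_subset := subset_rfl

/-! ### Auxiliary infrastructure -/

open scoped Classical

lemma runPrefix_getElem {M : Type u} (R : ℕ → M) {n q : ℕ} (h : q < n) :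
    (runPrefix R n)[q]'(by simp [runPrefix, h]) = R q := by
  simp [runPrefix]

lemma runPrefix_length {M : Type u} (R : ℕ → M) (n : ℕ) : (runPrefix R n).length = n := by
  simp [runPrefix]

lemma runPrefix_eq_iff {M : Type u} {R S : ℕ → M} {m : ℕ} :
    runPrefix R m = runPrefix S m ↔ ∀ q < m, R q = S q := by
  constructor
  · intro h q hq
    have h1 := runPrefix_getElem R hq
    have h2 := runPrefix_getElem S hq
    rw [← h1, ← h2]
    simp [h]
  · intro h
    apply List.ext_getElem (by simp [runPrefix_length])
    intro q h1 h2
    rw [runPrefix_length] at h1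
    rw [runPrefix_getElem R h1, runPrefix_getElem S h1]
    exact h q h1

lemma runPrefix_eq_of_eq {M : Type u} {S S' : ℕ → M} {m m' : ℕ}
    (h : runPrefix S m = runPrefix S' m) (hm : m' ≤ m) : runPrefix S m' = runPrefix S' m' :=
  runPrefix_eq_iff.2 fun q hq => runPrefix_eq_iff.1 h q (lt_of_lt_of_le hq hm)

lemma runPrefix_succ_eq {M : Type u} {S S' : ℕ → M} {q : ℕ} :
    runPrefix S (q+1) = runPrefix S' (q+1) ↔ runPrefix S q = runPrefix S' q ∧ S q = S' q := by
  simp only [runPrefix_eq_iff]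
  constructor
  · exact fun h => ⟨fun q' h' => h q' (by omega), h q (by omega)⟩
  · rintro ⟨h1, h2⟩ q' h'
    rcases Nat.lt_succ_iff_lt_or_eq.1 h' with h'' | rfl
    exacts [h1 q' h'', h2]

lemma runPrefix_getElem? {M : Type u} (S : ℕ → M) {m q : ℕ} (h : q < m) :
    (runPrefix S m)[q]? = some (S q) := by
  rw [List.getElem?_eq_getElem (by rw [runPrefix_length]; exact h)]
  rw [runPrefix_getElem S h]

lemma find_congr {p q : ℕ → Prop} [DecidablePred p] [DecidablePred q]
    (hp : ∃ n, p n) (hq : ∃ n, q n) (h : ∀ n, p n ↔ q n) :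
    Nat.find hp = Nat.find hq := by
  apply le_antisymm
  · exact Nat.find_le ((h _).2 (Nat.find_spec hq))
  · exact Nat.find_le ((h _).1 (Nat.find_spec hp))

lemma barMapsTo_id {M : Type u} {R S : ℕ → M} (h : BarMapsTo id R S) : S = R := by
  funext q
  have h1 : runPrefix S (q+1) = runPrefix R (q+1) := h (q+1)
  exact runPrefix_eq_iff.1 h1 q (Nat.lt_succ_self q)

lemma exists_run_through {M : Type u} {T : Set (List M)} (hT : IsGameTree T) {t : List M}
    (ht : t ∈ T) : ∃ S, S ∈ Runs T ∧ runPrefix S t.length = t := by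
  obtain ⟨hcl, hext⟩ := hT
  let u : ℕ → {l : List M // l ∈ T} := fun q => Nat.rec ⟨t, ht⟩
    (fun _ p => ⟨p.1 ++ [Classical.choose (hext p.1 p.2)], Classical.choose_spec (hext p.1 p.2)⟩) q
  have hstep : ∀ q, ∃ x : M, (u (q+1)).1 = (u q).1 ++ [x] := fun q => ⟨_, rfl⟩
  have hlen : ∀ q, (u q).1.length = t.length + q := by
    intro q; induction q with
    | zero => rfl
    | succ q ih =>
      obtain ⟨x, hx⟩ := hstep q
      rw [hx, List.length_append, ih]; simp [Nat.add_assoc]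
  have hpre : ∀ q q', q ≤ q' → (u q).1 <+: (u q').1 := by
    intro q q' h
    induction q', h using Nat.le_induction with
    | base => exact List.prefix_refl _
    | succ q' hq ih =>
      obtain ⟨x, hx⟩ := hstep q'
      rw [hx]; exact ih.trans ⟨_, rfl⟩
  have hq1 : ∀ q, q < (u (q+1)).1.length := by
    intro q; rw [hlen (q+1)]; omega
  let S : ℕ → M := fun q => (u (q+1)).1[q]'(hq1 q)
  have key : ∀ m, runPrefix S m = (u m).1.take m := by
    intro m
    apply List.ext_getElem
    · rw [runPrefix_length, List.length_take, hlen]; omega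
    · intro q hq hq'
      rw [runPrefix_length] at hq
      rw [runPrefix_getElem S hq]
      have hqm : q < (u m).1.length := by rw [hlen m]; omega
      have h2 : (List.take m (u m).1)[q]'hq' = (u m).1[q]'hqm := by
        simp [List.getElem_take]
      rw [h2]
      exact (hpre (q+1) m hq).getElem (hq1 q)
  refine ⟨S, fun m => (key m) ▸ hcl _ (u m).2 m, ?_⟩
  rw [key]
  have h3 : t <+: (u t.length).1 := hpre 0 t.length (Nat.zero_le _)
  exact (List.prefix_iff_eq_take.1 h3).symm

lemma mem_Tseq (R : ℕ → ℕ → ℕ) (n i p : ℕ) (hi : i ≤ n) : runPrefix (R i) p ∈ Tseq R n :=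
  ⟨i, hi, p, rfl⟩

lemma Tseq_mono {R : ℕ → ℕ → ℕ} {n n' : ℕ} (h : n ≤ n') : Tseq R n ⊆ Tseq R n' := by
  rintro t ⟨i, hi, p, rfl⟩; exact ⟨i, le_trans hi h, p, rfl⟩

lemma runs_Tseq (R : ℕ → ℕ → ℕ) (n : ℕ) : Runs (Tseq R n) = {S | ∃ i ≤ n, S = R i} := by
  ext S
  constructor
  · intro hS
    have hF : ∀ m : ℕ, ∃ i, i ≤ n ∧ runPrefix S m = runPrefix (R i) m := by
      intro m
      obtain ⟨i, hi, m', h⟩ := hS m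
      have hm : m' = m := by
        have := congrArg List.length h
        simpa [runPrefix_length, eq_comm] using this
      exact ⟨i, hi, hm ▸ h⟩
    choose F hF1 hF2 using hF
    let G : ℕ → Fin (n+1) := fun m => ⟨F m, Nat.lt_succ_of_le (hF1 m)⟩
    obtain ⟨y, hy⟩ := Finite.exists_infinite_fiber G
    replace hy := Set.infinite_coe_iff.1 hy
    refine ⟨y.1, Nat.le_of_lt_succ y.2, ?_⟩
    funext q
    obtain ⟨m, hm, hmq⟩ := hy.exists_gt q
    have hGm : F m = y.1 := congrArg Fin.val hm
    have := runPrefix_eq_iff.1 (hF2 m) q hmq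
    rwa [hGm] at this
  · rintro ⟨i, hi, rfl⟩ m
    exact mem_Tseq R n i m hi

/-! ### The coding map ψ -/

/-- `S` agrees with some prescribed run `φb i`, `i < n₀`, up to length `q+1`. -/
def dagP {M : Type u} (φb : ℕ → ℕ → M) (n₀ : ℕ) (S : ℕ → M) (q : ℕ) : Prop :=
  ∃ i, i < n₀ ∧ runPrefix (φb i) (q+1) = runPrefix S (q+1)

/-- `j` is an index in `ls` of a run agreeing with `S` up to length `q+1`. -/
def idxP {M : Type u} (ls : List (ℕ → M)) (S : ℕ → M) (q j : ℕ) : Prop :=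
  j < ls.length ∧ runPrefix (ls.getD j S) (q+1) = runPrefix S (q+1)

/-- The coding map sending runs of a finite game to eventually-zero sequences. -/
noncomputable def auxPsi {M : Type u} (ρ : ℕ → ℕ → ℕ) (φb : ℕ → ℕ → M) (n₀ L B : ℕ)
    (ls : List (ℕ → M)) (S : ℕ → M) (q : ℕ) : ℕ :=
  if h : dagP φb n₀ S q then ρ (Nat.find h) q
  else if q < L then (if h' : ∃ j, idxP ls S q j then B + Nat.find h' else 0)
  else 0

section Aux

variable {M : Type u} {ρ : ℕ → ℕ → ℕ} {φb : ℕ → ℕ → M} {n₀ L B : ℕ} {ls : List (ℕ → M)}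

lemma dagP_iff {S S' : ℕ → M} {q : ℕ} (h : runPrefix S (q+1) = runPrefix S' (q+1)) (i : ℕ) :
    (i < n₀ ∧ runPrefix (φb i) (q+1) = runPrefix S (q+1)) ↔
      (i < n₀ ∧ runPrefix (φb i) (q+1) = runPrefix S' (q+1)) := by
  rw [h]

lemma idxP_iff {S S' : ℕ → M} {q : ℕ} (h : runPrefix S (q+1) = runPrefix S' (q+1)) (j : ℕ) :
    idxP ls S q j ↔ idxP ls S' q j := by
  unfold idxP
  constructor
  · rintro ⟨hj, hp⟩
    refine ⟨hj, ?_⟩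
    rw [List.getD_eq_getElem ls S' hj, ← List.getD_eq_getElem ls S hj, hp.trans h]
  · rintro ⟨hj, hp⟩
    refine ⟨hj, ?_⟩
    rw [List.getD_eq_getElem ls S hj, ← List.getD_eq_getElem ls S' hj, hp.trans h.symm]

lemma auxPsi_of_dag {S : ℕ → M} {q : ℕ} (h : dagP φb n₀ S q) :
    auxPsi ρ φb n₀ L B ls S q = ρ (Nat.find h) q := by
  unfold auxPsi; rw [dif_pos h]

lemma auxPsi_not_dag_lt_ex {S : ℕ → M} {q : ℕ} (h : ¬ dagP φb n₀ S q) (hq : q < L)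
    (h' : ∃ j, idxP ls S q j) :
    auxPsi ρ φb n₀ L B ls S q = B + Nat.find h' := by
  unfold auxPsi; rw [dif_neg h, if_pos hq, dif_pos h']

lemma auxPsi_not_dag_lt_nex {S : ℕ → M} {q : ℕ} (h : ¬ dagP φb n₀ S q) (hq : q < L)
    (h' : ¬ ∃ j, idxP ls S q j) :
    auxPsi ρ φb n₀ L B ls S q = 0 := by
  unfold auxPsi; rw [dif_neg h, if_pos hq, dif_neg h']

lemma auxPsi_not_dag_ge {S : ℕ → M} {q : ℕ} (h : ¬ dagP φb n₀ S q) (hq : ¬ q < L) :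
    auxPsi ρ φb n₀ L B ls S q = 0 := by
  unfold auxPsi; rw [dif_neg h, if_neg hq]

lemma auxPsi_congr {S S' : ℕ → M} {q : ℕ} (h : runPrefix S (q+1) = runPrefix S' (q+1)) :
    auxPsi ρ φb n₀ L B ls S q = auxPsi ρ φb n₀ L B ls S' q := by
  by_cases hd : dagP φb n₀ S q
  · have hd' : dagP φb n₀ S' q := by
      obtain ⟨i, hi⟩ := hd; exact ⟨i, (dagP_iff h i).1 hi⟩
    rw [auxPsi_of_dag hd, auxPsi_of_dag hd']
    congr 1
    exact find_congr hd hd' (fun i => dagP_iff h i)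
  · have hd' : ¬ dagP φb n₀ S' q := by
      intro hh; obtain ⟨i, hi⟩ := hh; exact hd ⟨i, (dagP_iff h i).2 hi⟩
    by_cases hq : q < L
    · by_cases hj : ∃ j, idxP ls S q j
      · have hj' : ∃ j, idxP ls S' q j := by
          obtain ⟨j, hjj⟩ := hj; exact ⟨j, (idxP_iff h j).1 hjj⟩
        rw [auxPsi_not_dag_lt_ex hd hq hj, auxPsi_not_dag_lt_ex hd' hq hj']
        congr 1
        exact find_congr hj hj' (fun j => idxP_iff h j)
      · have hj' : ¬ ∃ j, idxP ls S' q j := by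
          intro hh; obtain ⟨j, hjj⟩ := hh; exact hj ⟨j, (idxP_iff h j).2 hjj⟩
        rw [auxPsi_not_dag_lt_nex hd hq hj, auxPsi_not_dag_lt_nex hd' hq hj']
    · rw [auxPsi_not_dag_ge hd hq, auxPsi_not_dag_ge hd' hq]

lemma auxPsi_runPrefix_congr {S S' : ℕ → M} {m : ℕ} (h : runPrefix S m = runPrefix S' m) :
    runPrefix (auxPsi ρ φb n₀ L B ls S) m = runPrefix (auxPsi ρ φb n₀ L B ls S') m :=
  runPrefix_eq_iff.2 fun q hq => auxPsi_congr (runPrefix_eq_of_eq h (by omega))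

lemma auxPsi_phib
    (h2 : ∀ i, i < n₀ → ∀ j, j < n₀ → ∀ m,
      (runPrefix (φb i) m = runPrefix (φb j) m ↔ runPrefix (ρ i) m = runPrefix (ρ j) m))
    {i q : ℕ} (hi : i < n₀) : auxPsi ρ φb n₀ L B ls (φb i) q = ρ i q := by
  have hd : dagP φb n₀ (φb i) q := ⟨i, hi, rfl⟩
  rw [auxPsi_of_dag hd]
  obtain ⟨hj, hp⟩ := Nat.find_spec hd
  exact runPrefix_eq_iff.1 ((h2 _ hj i hi (q+1)).1 hp) q (Nat.lt_succ_self q)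

lemma auxPsi_c00 (hz : ∀ i, i < n₀ → ∀ q, L ≤ q → ρ i q = 0) (S : ℕ → M) :
    auxPsi ρ φb n₀ L B ls S ∈ c00 := by
  refine ⟨L, fun q hq => ?_⟩
  by_cases hd : dagP φb n₀ S q
  · rw [auxPsi_of_dag hd]; exact hz _ (Nat.find_spec hd).1 q hq
  · exact auxPsi_not_dag_ge hd (by omega)

lemma auxPsi_ne
    (h2 : ∀ i, i < n₀ → ∀ j, j < n₀ → ∀ m,
      (runPrefix (φb i) m = runPrefix (φb j) m ↔ runPrefix (ρ i) m = runPrefix (ρ j) m))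
    (hB : ∀ i, i < n₀ → ∀ q, q < L → ρ i q < B)
    {S S' : ℕ → M} (hS : S ∈ ls) (hS' : S' ∈ ls) {q : ℕ} (hqL : q < L)
    (hagree : runPrefix S q = runPrefix S' q) (hne : S q ≠ S' q) :
    auxPsi ρ φb n₀ L B ls S q ≠ auxPsi ρ φb n₀ L B ls S' q := by
  have hexS : ∃ j, idxP ls S q j := by
    obtain ⟨j, hj, hje⟩ := List.getElem_of_mem hS
    exact ⟨j, hj, by rw [List.getD_eq_getElem ls S hj, hje]⟩
  have hexS' : ∃ j, idxP ls S' q j := by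
    obtain ⟨j, hj, hje⟩ := List.getElem_of_mem hS'
    exact ⟨j, hj, by rw [List.getD_eq_getElem ls S' hj, hje]⟩
  by_cases hdS : dagP φb n₀ S q <;> by_cases hdS' : dagP φb n₀ S' q
  · -- both prescribed
    rw [auxPsi_of_dag hdS, auxPsi_of_dag hdS']
    obtain ⟨hi, hip⟩ := Nat.find_spec hdS
    obtain ⟨hi', hip'⟩ := Nat.find_spec hdS'
    intro heq
    have e1 : runPrefix (φb (Nat.find hdS)) q = runPrefix (φb (Nat.find hdS')) q := by
      have a1 := runPrefix_eq_of_eq hip (Nat.le_succ q)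
      have a2 := runPrefix_eq_of_eq hip' (Nat.le_succ q)
      rw [a1, hagree, ← a2]
    have e2 : runPrefix (ρ (Nat.find hdS)) q = runPrefix (ρ (Nat.find hdS')) q :=
      (h2 _ hi _ hi' q).1 e1
    have e3 : runPrefix (ρ (Nat.find hdS)) (q+1) = runPrefix (ρ (Nat.find hdS')) (q+1) :=
      runPrefix_succ_eq.2 ⟨e2, heq⟩
    have e4 : runPrefix (φb (Nat.find hdS)) (q+1) = runPrefix (φb (Nat.find hdS')) (q+1) :=
      (h2 _ hi _ hi' (q+1)).2 e3
    have e5 : φb (Nat.find hdS) q = S q := runPrefix_eq_iff.1 hip q (Nat.lt_succ_self q)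
    have e6 : φb (Nat.find hdS') q = S' q := runPrefix_eq_iff.1 hip' q (Nat.lt_succ_self q)
    have e7 : φb (Nat.find hdS) q = φb (Nat.find hdS') q :=
      runPrefix_eq_iff.1 e4 q (Nat.lt_succ_self q)
    exact hne (by rw [← e5, e7, e6])
  · rw [auxPsi_of_dag hdS, auxPsi_not_dag_lt_ex hdS' hqL hexS']
    have := hB _ (Nat.find_spec hdS).1 q hqL
    omega
  · rw [auxPsi_not_dag_lt_ex hdS hqL hexS, auxPsi_of_dag hdS']
    have := hB _ (Nat.find_spec hdS').1 q hqL
    omega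
  · rw [auxPsi_not_dag_lt_ex hdS hqL hexS, auxPsi_not_dag_lt_ex hdS' hqL hexS']
    intro heq
    have hjj : Nat.find hexS = Nat.find hexS' := by omega
    obtain ⟨hlt, hp⟩ := Nat.find_spec hexS
    obtain ⟨hlt', hp'⟩ := Nat.find_spec hexS'
    apply hne
    have hgd : ls.getD (Nat.find hexS) S = ls.getD (Nat.find hexS') S' := by
      rw [List.getD_eq_getElem ls S hlt, List.getD_eq_getElem ls S' hlt']
      congr 1
    have : runPrefix S (q+1) = runPrefix S' (q+1) := by
      rw [← hp, hgd, hp']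
    exact runPrefix_eq_iff.1 this q (Nat.lt_succ_self q)

end Aux

/-! ### The master embedding lemma -/

lemma master {M : Type u} (R : ℕ → ℕ → ℕ) (hsurj : ∀ x ∈ c00, ∃ n, R n = x)
    (H : Game M) (hfin : H.IsFin) (htriv : H.payoff = Runs H.tree)
    (n₀ n₁ : ℕ) (ρ : ℕ → ℕ → ℕ) (φb : ℕ → ℕ → M)
    (h1 : ∀ i, i < n₀ → φb i ∈ Runs H.tree)
    (h2 : ∀ i, i < n₀ → ∀ j, j < n₀ → ∀ m,
      (runPrefix (φb i) m = runPrefix (φb j) m ↔ runPrefix (ρ i) m = runPrefix (ρ j) m))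
    (h3 : ∀ i, i < n₀ → ρ i ∈ c00) :
    ∃ m, n₁ ≤ m ∧ ∃ g : List M → List ℕ, IsGameEmbedding H (Gseq R m) g ∧
      ∀ i, i < n₀ → ∀ p, g (runPrefix (φb i) p) = runPrefix (ρ i) p := by
  classical
  set ls : List (ℕ → M) := hfin.toFinset.toList with hlsdef
  have hmemls : ∀ S ∈ Runs H.tree, S ∈ ls := fun S h => by
    rw [hlsdef, Finset.mem_toList]; exact hfin.mem_toFinset.2 h
  -- the bound L
  obtain ⟨L, hLdiff, hLzero⟩ : ∃ L : ℕ,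
      (∀ S ∈ Runs H.tree, ∀ S' ∈ Runs H.tree, S ≠ S' → ∃ d, d < L ∧ S d ≠ S' d) ∧
      (∀ i, i < n₀ → ∀ q, L ≤ q → ρ i q = 0) := by
    refine ⟨max (hfin.toFinset.sup fun S => hfin.toFinset.sup fun S' =>
        if h : ∃ d, S d ≠ S' d then Nat.find h + 1 else 0)
        ((Finset.range n₀).sup fun i => if h : ρ i ∈ c00 then Classical.choose h else 0), ?_, ?_⟩
    · intro S hS S' hS' hne
      have hex : ∃ d, S d ≠ S' d := by
        by_contra hc; push_neg at hc; exact hne (funext hc)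
      refine ⟨Nat.find hex, ?_, Nat.find_spec hex⟩
      have b1 : (if h : ∃ d, S d ≠ S' d then Nat.find h + 1 else 0) ≤
          hfin.toFinset.sup fun S' => if h : ∃ d, S d ≠ S' d then Nat.find h + 1 else 0 :=
        Finset.le_sup (f := fun S' => if h : ∃ d, S d ≠ S' d then Nat.find h + 1 else 0)
          (hfin.mem_toFinset.2 hS')
      have b2 : (hfin.toFinset.sup fun S' => if h : ∃ d, S d ≠ S' d then Nat.find h + 1 else 0) ≤
          hfin.toFinset.sup fun S => hfin.toFinset.sup fun S' =>
            if h : ∃ d, S d ≠ S' d then Nat.find h + 1 else 0 :=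
        Finset.le_sup (f := fun S => hfin.toFinset.sup fun S' =>
            if h : ∃ d, S d ≠ S' d then Nat.find h + 1 else 0) (hfin.mem_toFinset.2 hS)
      rw [dif_pos hex] at b1
      calc Nat.find hex < Nat.find hex + 1 := Nat.lt_succ_self _
        _ ≤ _ := le_trans (le_trans b1 b2) (le_max_left _ _)
    · intro i hi q hq
      have b1 : (if h : ρ i ∈ c00 then Classical.choose h else 0) ≤
          (Finset.range n₀).sup fun i => if h : ρ i ∈ c00 then Classical.choose h else 0 :=
        Finset.le_sup (f := fun i => if h : ρ i ∈ c00 then Classical.choose h else 0)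
          (Finset.mem_range.2 hi)
      rw [dif_pos (h3 i hi)] at b1
      exact Classical.choose_spec (h3 i hi) q
        (le_trans (le_trans b1 (le_max_right _ _)) hq)
  -- the bound B
  obtain ⟨B, hB⟩ : ∃ B : ℕ, ∀ i, i < n₀ → ∀ q, q < L → ρ i q < B := by
    refine ⟨((Finset.range n₀).sup fun i => (Finset.range L).sup (ρ i)) + 1, ?_⟩
    intro i hi q hq
    have b1 : ρ i q ≤ (Finset.range L).sup (ρ i) := Finset.le_sup (Finset.mem_range.2 hq)
    have b2 : (Finset.range L).sup (ρ i) ≤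
        (Finset.range n₀).sup fun i => (Finset.range L).sup (ρ i) :=
      Finset.le_sup (f := fun i => (Finset.range L).sup (ρ i)) (Finset.mem_range.2 hi)
    omega
  have hψc : ∀ S : ℕ → M, auxPsi ρ φb n₀ L B ls S ∈ c00 := auxPsi_c00 hLzero
  -- runs through moments
  have hsel : ∀ t, t ∈ H.tree → ∃ S, S ∈ Runs H.tree ∧ runPrefix S t.length = t :=
    fun t ht => exists_run_through H.isGameTree ht
  -- the embedding g
  obtain ⟨g, hgval⟩ : ∃ g : List M → List ℕ, ∀ t, t ∈ H.tree →
      ∀ S ∈ Runs H.tree, runPrefix S t.length = t →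
      g t = runPrefix (auxPsi ρ φb n₀ L B ls S) t.length := by
    refine ⟨fun t => if h : t ∈ H.tree then
      runPrefix (auxPsi ρ φb n₀ L B ls (Classical.choose (hsel t h))) t.length else [], ?_⟩
    intro t h S hS hpre
    dsimp only
    rw [dif_pos h]
    obtain ⟨hcS, hcpre⟩ := Classical.choose_spec (hsel t h)
    exact auxPsi_runPrefix_congr (hcpre.trans hpre.symm)
  -- index function and bound m
  obtain ⟨iOf, hiOf⟩ : ∃ iOf : (ℕ → M) → ℕ, ∀ S, R (iOf S) = auxPsi ρ φb n₀ L B ls S :=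
    ⟨fun S => Classical.choose (hsurj _ (hψc S)), fun S => Classical.choose_spec (hsurj _ (hψc S))⟩
  refine ⟨max n₁ (hfin.toFinset.sup iOf), le_max_left _ _, g, ?_, ?_⟩
  · have hiOfle : ∀ S ∈ Runs H.tree, iOf S ≤ max n₁ (hfin.toFinset.sup iOf) := fun S hS =>
      le_trans (Finset.le_sup (hfin.mem_toFinset.2 hS)) (le_max_right _ _)
    have hgmem : ∀ t ∈ H.tree, g t ∈ Tseq R (max n₁ (hfin.toFinset.sup iOf)) := by
      intro t ht
      obtain ⟨S, hS, hpre⟩ := hsel t ht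
      rw [hgval t ht S hS hpre, ← hiOf S]
      exact ⟨iOf S, hiOfle S hS, t.length, rfl⟩
    have hglen : ∀ t ∈ H.tree, (g t).length = t.length := by
      intro t ht
      obtain ⟨S, hS, hpre⟩ := hsel t ht
      rw [hgval t ht S hS hpre, runPrefix_length]
    refine ⟨⟨hgmem, hglen, ?_⟩, ?_, ?_⟩
    · -- takes
      intro t ht k
      have htk : t.take k ∈ H.tree := H.isGameTree.1 t ht k
      obtain ⟨S, hS, hpre⟩ := hsel t ht
      have hpre' : runPrefix S (t.take k).length = t.take k := by
        rw [List.length_take]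
        have := congrArg (List.take k) hpre
        rwa [runPrefix_take] at this
      rw [hgval _ htk S hS hpre', hgval t ht S hS hpre, runPrefix_take, List.length_take]
    · -- injectivity
      intro t ht s hs hgts
      obtain ⟨S, hS, hpre⟩ := hsel t ht
      obtain ⟨S', hS', hpre'⟩ := hsel s hs
      have hlen : t.length = s.length := by
        have := congrArg List.length hgts
        rwa [hglen t ht, hglen s hs] at this
      by_contra hne
      have hex : ∃ q : ℕ, t[q]? ≠ s[q]? := by
        by_contra hc; push_neg at hc; exact hne (List.ext_getElem? hc)
      have hqspec : t[Nat.find hex]? ≠ s[Nat.find hex]? := Nat.find_spec hex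
      have hqlt : Nat.find hex < t.length := by
        by_contra hq
        push_neg at hq
        exact hqspec (by rw [List.getElem?_eq_none hq, List.getElem?_eq_none (hlen ▸ hq)])
      have hSt : ∀ q', q' < t.length → t[q']? = some (S q') := fun q' h => by
        conv_lhs => rw [← hpre]
        exact runPrefix_getElem? S h
      have hSs : ∀ q', q' < s.length → s[q']? = some (S' q') := fun q' h => by
        conv_lhs => rw [← hpre']
        exact runPrefix_getElem? S' h
      have hagree : runPrefix S (Nat.find hex) = runPrefix S' (Nat.find hex) := by
        apply runPrefix_eq_iff.2
        intro q' hq'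
        have heqq : t[q']? = s[q']? := not_not.1 (Nat.find_min hex hq')
        have := (hSt q' (by omega)).symm.trans (heqq.trans (hSs q' (by omega)))
        exact Option.some_injective _ this
      have hneq : S (Nat.find hex) ≠ S' (Nat.find hex) := by
        intro hc
        apply hqspec
        rw [hSt _ hqlt, hSs _ (hlen ▸ hqlt), hc]
      have hqL : Nat.find hex < L := by
        obtain ⟨d, hd, hdne⟩ := hLdiff S hS S' hS' (fun hc => hneq (by rw [hc]))
        have : Nat.find hex ≤ d := by
          by_contra hcc
          push_neg at hcc
          exact hdne (runPrefix_eq_iff.1 hagree d hcc)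
        omega
      have := auxPsi_ne (L := L) (B := B) h2 hB (hmemls S hS) (hmemls S' hS') hqL hagree hneq
      apply this
      have hgg : runPrefix (auxPsi ρ φb n₀ L B ls S) t.length
          = runPrefix (auxPsi ρ φb n₀ L B ls S') s.length := by
        rw [← hgval t ht S hS hpre, ← hgval s hs S' hS' hpre', hgts]
      rw [← hlen] at hgg
      exact runPrefix_eq_iff.1 hgg _ hqlt
    · -- payoff condition
      intro Run hRun S hBar
      have hRp : Run ∈ H.payoff := by rw [htriv]; exact hRun
      have hSr : S ∈ Runs (Tseq R (max n₁ (hfin.toFinset.sup iOf))) := fun p => by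
        rw [hBar p]; exact hgmem _ (hRun p)
      exact iff_of_true hRp hSr
  · -- prescribed values
    intro i hi p
    have hmem' : runPrefix (φb i) p ∈ H.tree := h1 i hi p
    have hplen : runPrefix (φb i) (runPrefix (φb i) p).length = runPrefix (φb i) p := by
      rw [runPrefix_length]
    rw [hgval _ hmem' (φb i) (h1 i hi) hplen, runPrefix_length]
    exact runPrefix_eq_iff.2 fun q hq => auxPsi_phib h2 hi

/-! ### Universality and amalgamation -/

lemma universal (R : ℕ → ℕ → ℕ) (hsurj : ∀ x ∈ c00, ∃ n, R n = x)
    {M : Type u} (H : Game M) (hfin : H.IsFin) (htriv : H.payoff = Runs H.tree) :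
    ∃ (n : ℕ) (g : List M → List ℕ), IsGameEmbedding H (Gseq R n) g := by
  rcases Set.eq_empty_or_nonempty H.tree with he | ⟨t, ht⟩
  · refine ⟨0, fun _ => [], ⟨⟨?_, ?_, ?_⟩, ?_, ?_⟩⟩
    · intro t ht; rw [he] at ht; exact absurd ht (Set.notMem_empty t)
    · intro t ht; rw [he] at ht; exact absurd ht (Set.notMem_empty t)
    · intro t ht; rw [he] at ht; exact absurd ht (Set.notMem_empty t)
    · intro t ht; rw [he] at ht; exact absurd ht (Set.notMem_empty t)
    · intro Run hRun
      have := hRun 0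
      rw [he] at this
      exact absurd this (Set.notMem_empty _)
  · obtain ⟨x, _⟩ := H.isGameTree.2 _ (H.isGameTree.1 t ht 0)
    obtain ⟨m, _, g, hg, _⟩ := master R hsurj H hfin htriv 0 0 (fun _ _ => 0) (fun _ _ => x)
      (fun i hi => absurd hi (Nat.not_lt_zero i))
      (fun i hi => absurd hi (Nat.not_lt_zero i))
      (fun i hi => absurd hi (Nat.not_lt_zero i))
    exact ⟨m, g, hg⟩

lemma amalg (R : ℕ → ℕ → ℕ) (hmem : ∀ n, R n ∈ c00) (hsurj : ∀ x ∈ c00, ∃ n, R n = x)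
    (n : ℕ) {M : Type u} (H : Game M) (hfin : H.IsFin) (htriv : H.payoff = Runs H.tree)
    (f : List ℕ → List M) (hf : IsGameEmbedding (Gseq R n) H f) :
    ∃ m : ℕ, n ≤ m ∧ ∃ g : List M → List ℕ, IsGameEmbedding H (Gseq R m) g ∧
      ∀ t ∈ (Gseq R n).tree, g (f t) = t := by
  obtain ⟨⟨hfmem, hflen, hftake⟩, hfinj, hfrun⟩ := hf
  have htree : ∀ i p, i ≤ n → runPrefix (R i) p ∈ (Gseq R n).tree := fun i p hi =>
    mem_Tseq R n i p hi
  have h01 : runPrefix (R 0) 1 ∈ (Gseq R n).tree := htree 0 1 (Nat.zero_le n)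
  have hne : f (runPrefix (R 0) 1) ≠ [] := by
    have hl := hflen _ h01
    rw [runPrefix_length] at hl
    intro hc
    rw [hc] at hl
    simp at hl
  set m₀ : M := (f (runPrefix (R 0) 1)).head hne with hm₀
  set fbar : ℕ → ℕ → M := fun i q => (f (runPrefix (R i) (q+1))).getD q m₀ with hfbar
  have hF1 : ∀ i, i ≤ n → ∀ p, runPrefix (fbar i) p = f (runPrefix (R i) p) := by
    intro i hi p
    apply List.ext_getElem
    · rw [runPrefix_length, hflen _ (htree i p hi), runPrefix_length]
    · intro q hq hq'
      rw [runPrefix_length] at hq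
      rw [runPrefix_getElem _ hq]
      show (f (runPrefix (R i) (q+1))).getD q m₀ = _
      have e1 : runPrefix (R i) (q+1) = (runPrefix (R i) p).take (q+1) := by
        rw [runPrefix_take]
        congr 1
        omega
      rw [e1, hftake _ (htree i p hi) (q+1)]
      have hlq : q < (f (runPrefix (R i) p)).length := by
        rw [hflen _ (htree i p hi), runPrefix_length]; omega
      have hlq2 : q < ((f (runPrefix (R i) p)).take (q+1)).length := by
        rw [List.length_take, hflen _ (htree i p hi), runPrefix_length]
        omega
      rw [List.getD_eq_getElem _ _ hlq2]
      rw [List.getElem_take]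
  have hF3 : ∀ i, i ≤ n → fbar i ∈ Runs H.tree := fun i hi p => by
    rw [hF1 i hi p]; exact hfmem _ (htree i p hi)
  have hF2 : ∀ i, i < n+1 → ∀ j, j < n+1 → ∀ p,
      (runPrefix (fbar i) p = runPrefix (fbar j) p ↔ runPrefix (R i) p = runPrefix (R j) p) := by
    intro i hi j hj p
    rw [hF1 i (by omega) p, hF1 j (by omega) p]
    constructor
    · intro h
      exact hfinj _ (htree i p (by omega)) _ (htree j p (by omega)) h
    · intro h
      rw [h]
  obtain ⟨m, hm, g, hg, hgf⟩ := master R hsurj H hfin htriv (n+1) n R fbar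
    (fun i hi => hF3 i (by omega)) hF2 (fun i _ => hmem i)
  refine ⟨m, hm, g, hg, ?_⟩
  rintro t ⟨i, hi, p, rfl⟩
  rw [← hF1 i hi p, hgf i (by omega) p]

/-- for an enumeration `(Rₙ)` of `c₀₀`, the games
`Gₙ = (Tₙ, Run(Tₙ))` are finite and trivial for Ali, form (with inclusions) a
Fraïssé sequence for the class of finite games trivial for Ali, and the inclusions
into `G_FL` form a colimit cocone of this sequence in `Games_A`. -/
theorem Gseq_fraisse_sequence_colimit_GFL (R : ℕ → ℕ → ℕ)
    (hmem : ∀ n, R n ∈ c00) (hsurj : ∀ x ∈ c00, ∃ n, R n = x) :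
    (∀ n, (Gseq R n).IsFin) ∧
    (∀ n, IsGameEmbedding (Gseq R n) (Gseq R (n + 1)) id) ∧
    -- (U): every finite game trivial for Ali embeds into some `Gseq R n`
    (∀ (M : Type u) (H : Game M), H.IsFin → H.payoff = Runs H.tree →
      ∃ (n : ℕ) (g : List M → List ℕ), IsGameEmbedding H (Gseq R n) g) ∧
    -- (A): the amalgamation property of the sequence (the connecting maps and the
    -- composites `e_{n,m}` are the identity inclusions)
    (∀ (n : ℕ) (M : Type u) (H : Game M), H.IsFin → H.payoff = Runs H.tree →
      ∀ f : List ℕ → List M, IsGameEmbedding (Gseq R n) H f →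
        ∃ m : ℕ, n ≤ m ∧ ∃ g : List M → List ℕ, IsGameEmbedding H (Gseq R m) g ∧
          ∀ t ∈ (Gseq R n).tree, g (f t) = t) ∧
    -- the inclusion maps form a colimit cocone into `G_FL` in `Games_A`
    (∀ n, IsAMorphism (Gseq R n) GFL id) ∧
    IsGamesACoconeColimit (Gseq R) (fun _ => id) GFL (fun _ => id) ∧
    (⋃ n, Tseq R n) = (Set.univ : Set (List ℕ)) ∧
    (⋃ n, Runs (Tseq R n)) = c00 := by
  have hUT : (⋃ n, Tseq R n) = (Set.univ : Set (List ℕ)) := by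
    apply Set.eq_univ_of_forall
    intro t
    have hS : (fun q => t.getD q 0) ∈ c00 :=
      ⟨t.length, fun q hq => List.getD_eq_default t 0 (by omega)⟩
    obtain ⟨j, hj⟩ := hsurj _ hS
    have ht : t = runPrefix (R j) t.length := by
      rw [hj]
      apply List.ext_getElem
      · rw [runPrefix_length]
      · intro q h1 h2
        rw [runPrefix_getElem _ h1, List.getD_eq_getElem t 0 h1]
    exact Set.mem_iUnion.2 ⟨j, j, le_refl j, t.length, ht⟩
  have hUR : (⋃ n, Runs (Tseq R n)) = c00 := by
    ext S
    simp only [Set.mem_iUnion]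
    constructor
    · rintro ⟨n, hS⟩
      rw [runs_Tseq] at hS
      obtain ⟨i, _, rfl⟩ := hS
      exact hmem i
    · intro h
      obtain ⟨j, hj⟩ := hsurj S h
      subst hj
      exact ⟨j, by rw [runs_Tseq]; exact ⟨j, le_refl j, rfl⟩⟩
  refine ⟨?_, ?_, ?_, ?_, ?_, ?_, hUT, hUR⟩
  · -- finiteness
    intro n
    apply Set.Finite.subset ((Set.finite_Iic n).image R)
    intro S hS
    have hS' : S ∈ Runs (Tseq R n) := hS
    rw [runs_Tseq] at hS'
    obtain ⟨i, hi, rfl⟩ := hS'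
    exact ⟨i, hi, rfl⟩
  · -- identity embeddings
    intro n
    refine ⟨⟨?_, fun t _ => rfl, fun t _ k => rfl⟩, fun t _ s _ hts => hts, ?_⟩
    · intro t ht
      exact Tseq_mono (Nat.le_succ n) ht
    · intro Run hRun S hBar
      have hSR := barMapsTo_id hBar
      subst hSR
      refine iff_of_true hRun ?_
      intro p
      exact Tseq_mono (Nat.le_succ n) (hRun p)
  · -- (U)
    intro M H hfin htriv
    exact universal R hsurj H hfin htriv
  · -- (A)
    intro n M H hfin htriv f hf
    exact amalg R hmem hsurj n H hfin htriv f hf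
  · -- A-morphisms into GFL
    intro n
    refine ⟨⟨fun t _ => trivial, fun t _ => rfl, fun t _ k => rfl⟩, ?_⟩
    intro Run hRun S hBar
    have hSR := barMapsTo_id hBar
    rw [hSR]
    have hR : Run ∈ Runs (Tseq R n) := hRun
    rw [runs_Tseq] at hR
    obtain ⟨i, _, rfl⟩ := hR
    exact hmem i
  · -- colimit cocone
    intro P H h hA hcomp
    have hex : ∀ t : List ℕ, ∃ nn, t ∈ Tseq R nn := by
      intro t
      have : t ∈ ⋃ nn, Tseq R nn := by rw [hUT]; trivial
      exact Set.mem_iUnion.1 this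
    have hmono : ∀ nn nn', nn ≤ nn' → ∀ t ∈ Tseq R nn, h nn' t = h nn t := by
      intro nn nn' hle
      induction nn', hle using Nat.le_induction with
      | base => intro t _; rfl
      | succ n' hle ih =>
        intro t ht
        calc h (n'+1) t = h n' t := hcomp n' t (Tseq_mono hle ht)
          _ = h nn t := ih t ht
    obtain ⟨nOf, hnOf⟩ : ∃ nOf : List ℕ → ℕ, ∀ t, t ∈ Tseq R (nOf t) :=
      ⟨fun t => Classical.choose (hex t), fun t => Classical.choose_spec (hex t)⟩
    have hk : ∀ nn, ∀ t ∈ Tseq R nn, h (nOf t) t = h nn t := by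
      intro nn t ht
      have e1 := hmono (nOf t) (max nn (nOf t)) (le_max_right _ _) t (hnOf t)
      have e2 := hmono nn (max nn (nOf t)) (le_max_left _ _) t ht
      rw [← e1, e2]
    refine ⟨fun t => h (nOf t) t, ⟨⟨?_, ?_, ?_⟩, ?_⟩, ?_, ?_⟩
    · intro t _
      exact (hA (nOf t)).1.1 t (hnOf t)
    · intro t _
      exact (hA (nOf t)).1.2.1 t (hnOf t)
    · intro t _ k
      have ht := hnOf t
      have htq : t.take k ∈ Tseq R (nOf t) := (Tseq_isGameTree R _).1 t ht k
      show h (nOf (t.take k)) (t.take k) = (h (nOf t) t).take k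
      rw [hk (nOf t) (t.take k) htq]
      exact (hA (nOf t)).1.2.2 t ht k
    · intro Run hRun S hBar
      obtain ⟨j, hj⟩ := hsurj Run hRun
      subst hj
      have hRunj : R j ∈ (Gseq R j).payoff := fun p => mem_Tseq R j j p (le_refl j)
      apply (hA j).2 (R j) hRunj S
      intro p
      rw [hBar p]
      exact hk j (runPrefix (R j) p) (mem_Tseq R j j p (le_refl j))
    · intro nn t ht
      exact hk nn t ht
    · intro k' _ hfac t _
      exact hfac (nOf t) t (hnOf t)

end FraisseGames
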